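/- Carleman's theorem: given a continuous function f : ℝ → ℂ and a continuous strictly positive function ε : ℝ → (0,∞), there exists an entire function g : ℂ → ℂ such that |f(x) - g(x)| < ε(x) for every x ∈ ℝ. -/

import Mathlib

/-!
Approximate `f` annulus by annulus. Suppose `S` is entire and `δₘ`-close to `f` on
`m ≤ |x| ≤ m + 1`. Multiply a polynomial approximation of `f - S` on `[-(m + 2), m + 2]` by the
entire cutoff `1 - exp (-(z / γ) ^ (2 n))`, `γ = m + 1/2`, `n` large: it is tiny on the disc
`‖z‖ ≤ m`, has modulus at most `1` on the real line (the exponent is even), and is close to `1`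
for `|x| ≥ m + 1`. Adding this correction to `S` makes it `δₘ₊₁`-close to `f` on the next
annulus, while changing it by at most `δₘ + δₘ₊₁` on the `m`-th annulus and by at most `δₘ₊₁` on
the disc. If `δ` halves at each step, the corrected functions converge locally uniformly to an
entire `g`, and on the `m`-th annulus `‖f - g‖ ≤ 5 δₘ`; it remains to pick `δₘ` below `ε / 5`
on `[-(m + 1), m + 1]`.
-/

open Filter Topology Set Polynomial

theorem exists_polynomial_near_of_continuousOn_complex {a b : ℝ} {F : ℝ → ℂ}
    (hF : ContinuousOn F (Icc a b)) {η : ℝ} (hη : 0 < η) :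
    ∃ p : ℂ[X], ∀ x ∈ Icc a b, ‖F x - p.eval (x : ℂ)‖ < η := by
  obtain ⟨p₁, hp₁⟩ := exists_polynomial_near_of_continuousOn a b (fun x ↦ (F x).re)
    (Complex.continuous_re.comp_continuousOn hF) (η / 2) (half_pos hη)
  obtain ⟨p₂, hp₂⟩ := exists_polynomial_near_of_continuousOn a b (fun x ↦ (F x).im)
    (Complex.continuous_im.comp_continuousOn hF) (η / 2) (half_pos hη)
  refine ⟨p₁.map Complex.ofRealHom + C Complex.I * p₂.map Complex.ofRealHom, fun x hx ↦ ?_⟩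
  have hmap (p : ℝ[X]) : (p.map Complex.ofRealHom).eval (x : ℂ) = p.eval x := by
    rw [eval_map]; exact eval₂_at_apply _ _
  calc ‖F x - (p₁.map Complex.ofRealHom + C Complex.I * p₂.map Complex.ofRealHom).eval (x : ℂ)‖
      ≤ |(F x).re - p₁.eval x| + |(F x).im - p₂.eval x| := by
        convert Complex.norm_le_abs_re_add_abs_im _ using 3 <;> simp [hmap]
    _ < η / 2 + η / 2 := by
        rw [abs_sub_comm, abs_sub_comm (F x).im]
        exact add_lt_add (hp₁ x hx) (hp₂ x hx)
    _ = η := add_halves η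

theorem exists_entire_cutoff {r s δ : ℝ} (hr : 0 ≤ r) (hrs : r < s) (hδ : 0 < δ) :
    ∃ e : ℂ → ℂ, Differentiable ℂ e ∧ (∀ z : ℂ, ‖z‖ ≤ r → ‖e z‖ ≤ δ) ∧
      (∀ x : ℝ, ‖e x‖ ≤ 1) ∧ ∀ x : ℝ, s ≤ |x| → ‖1 - e x‖ ≤ δ := by
  set γ := (r + s) / 2 with hγ_def
  have hγ : 0 < γ := by linarith
  have ha₀ : 0 ≤ r / γ := div_nonneg hr hγ.le
  have ha : r / γ < 1 := (div_lt_one hγ).2 (by linarith)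
  have hb : 1 < s / γ := (one_lt_div hγ).2 (by linarith)
  have h_in : Tendsto (fun n : ℕ ↦ 2 * (r / γ) ^ (2 * n)) atTop (𝓝 0) := by
    simpa [pow_mul] using (tendsto_pow_atTop_nhds_zero_of_lt_one (by positivity)
      (pow_lt_one₀ ha₀ ha two_ne_zero)).const_mul 2
  have h_out : Tendsto (fun n : ℕ ↦ Real.exp (-(s / γ) ^ (2 * n))) atTop (𝓝 0) := by
    refine Real.tendsto_exp_neg_atTop_nhds_zero.comp ?_
    simpa [pow_mul] using tendsto_pow_atTop_atTop_of_one_lt (one_lt_pow₀ hb two_ne_zero)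
  obtain ⟨n, hn_in, hn_out⟩ :=
    ((h_in.eventually (ge_mem_nhds hδ)).and (h_out.eventually (ge_mem_nhds hδ))).exists
  have h_real (x : ℝ) :
      Complex.exp (-((x : ℂ) / γ) ^ (2 * n)) = (Real.exp (-(x / γ) ^ (2 * n)) : ℂ) := by
    push_cast; rfl
  refine ⟨fun z ↦ 1 - Complex.exp (-(z / γ) ^ (2 * n)), by fun_prop, fun z hz ↦ ?_,
    fun x ↦ ?_, fun x hx ↦ ?_⟩
  · have hw : ‖(z / γ) ^ (2 * n)‖ ≤ (r / γ) ^ (2 * n) := by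
      rw [norm_pow, norm_div, Complex.norm_real, Real.norm_of_nonneg hγ.le]
      gcongr
    calc ‖1 - Complex.exp (-(z / γ) ^ (2 * n))‖ ≤ 2 * ‖-(z / γ) ^ (2 * n)‖ := by
          rw [norm_sub_rev]
          refine Complex.norm_exp_sub_one_le ?_
          rw [norm_neg]
          exact hw.trans (pow_le_one₀ ha₀ ha.le)
      _ ≤ δ := by rw [norm_neg]; linarith
  · beta_reduce
    rw [h_real, ← Complex.ofReal_one, ← Complex.ofReal_sub, Complex.norm_real, Real.norm_eq_abs,
      abs_le]
    have h_pos := Real.exp_pos (-(x / γ) ^ (2 * n))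
    have h_le : Real.exp (-(x / γ) ^ (2 * n)) ≤ 1 :=
      Real.exp_le_one_iff.2 (neg_nonpos.2 ((even_two_mul n).pow_nonneg _))
    constructor <;> linarith
  · beta_reduce
    rw [sub_sub_cancel, h_real, Complex.norm_real, Real.norm_of_nonneg (Real.exp_pos _).le]
    refine le_trans (Real.exp_le_exp.2 ?_) hn_out
    rw [neg_le_neg_iff, ← (even_two_mul n).pow_abs (x / γ), abs_div, abs_of_pos hγ]
    gcongr

theorem exists_entire_near_outside_disc {r s L η : ℝ} (hr : 0 ≤ r) (hrs : r < s) {h : ℝ → ℂ}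
    (hh : ContinuousOn h (Icc (-L) L)) (hη : 0 < η) :
    ∃ p : ℂ → ℂ, Differentiable ℂ p ∧ (∀ z : ℂ, ‖z‖ ≤ r → ‖p z‖ ≤ η) ∧
      (∀ x : ℝ, |x| ≤ L → ‖p x‖ ≤ ‖h x‖ + η) ∧
      ∀ x : ℝ, s ≤ |x| → |x| ≤ L → ‖h x - p x‖ ≤ η := by
  obtain ⟨q, hq⟩ := exists_polynomial_near_of_continuousOn_complex hh (half_pos hη)
  obtain ⟨M, hM⟩ := (isCompact_closedBall (0 : ℂ) (max r L)).exists_bound_of_continuousOn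
    q.differentiable.continuous.continuousOn
  have hM₀ : 0 ≤ M := (norm_nonneg _).trans (hM 0 (by simpa using le_max_of_le_left hr))
  obtain ⟨e, he, he_disc, he_le, he_out⟩ :=
    exists_entire_cutoff hr hrs (δ := η / (2 * (M + 1))) (by positivity)
  have hMδ : M * (η / (2 * (M + 1))) ≤ η / 2 :=
    calc M * (η / (2 * (M + 1))) ≤ (M + 1) * (η / (2 * (M + 1))) := by gcongr; linarith
      _ = η / 2 := by field_simp
  have hq_real (x : ℝ) (hx : |x| ≤ L) : ‖q.eval (x : ℂ)‖ ≤ M :=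
    hM x (by simpa using le_max_of_le_right hx)
  refine ⟨fun z ↦ q.eval z * e z, q.differentiable.mul he, fun z hz ↦ ?_, fun x hx ↦ ?_,
    fun x hx₁ hx₂ ↦ ?_⟩
  · calc ‖q.eval z * e z‖ ≤ M * (η / (2 * (M + 1))) := by
          rw [norm_mul]
          exact mul_le_mul (hM z (by simpa using le_max_of_le_left hz)) (he_disc z hz)
            (norm_nonneg _) hM₀
      _ ≤ η := by linarith
  · calc ‖q.eval (x : ℂ) * e x‖ ≤ ‖q.eval (x : ℂ)‖ := by
          rw [norm_mul]; exact mul_le_of_le_one_right (norm_nonneg _) (he_le x)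
      _ ≤ ‖h x‖ + η := by
          linarith [norm_le_norm_add_norm_sub' (q.eval (x : ℂ)) (h x),
            norm_sub_rev (h x) (q.eval (x : ℂ)), hq x (abs_le.1 hx)]
  · calc ‖h x - q.eval (x : ℂ) * e x‖
        = ‖(h x - q.eval (x : ℂ)) + q.eval (x : ℂ) * (1 - e x)‖ := by ring_nf
      _ ≤ η / 2 + M * (η / (2 * (M + 1))) := by
          refine (norm_add_le _ _).trans (add_le_add (hq x (abs_le.1 hx₂)).le ?_)
          rw [norm_mul]
          exact mul_le_mul (hq_real x hx₂) (he_out x hx₁) (norm_nonneg _) hM₀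
      _ ≤ η := by linarith

theorem exists_entire_seq_near_on_annuli {f : ℝ → ℂ} (hf : Continuous f) {δ : ℕ → ℝ}
    (hδ : ∀ m, 0 < δ m) :
    ∃ S : ℕ → ℂ → ℂ, (∀ m, Differentiable ℂ (S m)) ∧
      (∀ (m : ℕ) (z : ℂ), ‖z‖ ≤ m → ‖S (m + 1) z - S m z‖ ≤ δ (m + 1)) ∧
      (∀ (m : ℕ) (x : ℝ), m ≤ |x| → |x| ≤ m + 1 → ‖S (m + 1) x - S m x‖ ≤ δ m + δ (m + 1)) ∧
      ∀ (m : ℕ) (x : ℝ), m ≤ |x| → |x| ≤ m + 1 → ‖f x - S m x‖ ≤ δ m := by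
  let Near (m : ℕ) (T : ℂ → ℂ) : Prop := Differentiable ℂ T ∧
    ∀ x : ℝ, m ≤ |x| → |x| ≤ m + 1 → ‖f x - T x‖ ≤ δ m
  have step (m : ℕ) (T : ℂ → ℂ) (hT : Near m T) : ∃ p : ℂ → ℂ,
      (∀ z : ℂ, ‖z‖ ≤ m → ‖p z‖ ≤ δ (m + 1)) ∧
      (∀ x : ℝ, m ≤ |x| → |x| ≤ m + 1 → ‖p x‖ ≤ δ m + δ (m + 1)) ∧ Near (m + 1) (T + p) := by
    obtain ⟨p, hp, hp_disc, hp_real, hp_out⟩ := exists_entire_near_outside_disc (L := m + 2)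
      (h := fun x ↦ f x - T x) m.cast_nonneg (lt_add_one (m : ℝ))
      (hf.sub (hT.1.continuous.comp Complex.continuous_ofReal)).continuousOn (hδ (m + 1))
    refine ⟨p, hp_disc, fun x hx₁ hx₂ ↦ ?_, hT.1.add hp, fun x hx₁ hx₂ ↦ ?_⟩
    · linarith [hp_real x (by linarith), hT.2 x hx₁ hx₂]
    · rw [Pi.add_apply, ← sub_sub]
      exact hp_out x (by exact_mod_cast hx₁) (by push_cast at hx₂; linarith)
  choose! p hp_disc hp_gap hp_near using step
  obtain ⟨q, hq⟩ := exists_polynomial_near_of_continuousOn_complex (a := -1) (b := 1)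
    hf.continuousOn (hδ 0)
  let S : ℕ → ℂ → ℂ := fun m ↦ Nat.rec (fun z ↦ q.eval z) (fun m T ↦ T + p m T) m
  have hS : ∀ m, Near m (S m) := by
    intro m
    induction m with
    | zero => exact ⟨q.differentiable, fun x _ hx ↦ (hq x (abs_le.1 (by simpa using hx))).le⟩
    | succ m ih => exact hp_near m (S m) ih
  refine ⟨S, fun m ↦ (hS m).1, fun m z hz ↦ ?_, fun m x hx₁ hx₂ ↦ ?_, fun m ↦ (hS m).2⟩
  · simpa [S] using hp_disc m (S m) (hS m) z hz
  · simpa [S] using hp_gap m (S m) (hS m) x hx₁ hx₂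

theorem exists_tendstoLocallyUniformly_of_norm_sub_le {E : Type*} [NormedAddCommGroup E]
    [CompleteSpace E] {S : ℕ → ℂ → E} {δ : ℕ → ℝ}
    (hδ : Summable δ) (hS : ∀ (m : ℕ) (z : ℂ), ‖z‖ ≤ m → ‖S (m + 1) z - S m z‖ ≤ δ m) :
    ∃ g : ℂ → E, TendstoLocallyUniformly S g atTop := by
  refine ⟨fun z ↦ S 0 z + ∑' k, (S (k + 1) z - S k z),
    tendstoLocallyUniformly_iff_forall_isCompact.2 fun K hK ↦ ?_⟩
  obtain ⟨R, hKR⟩ := hK.isBounded.subset_closedBall 0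
  have hsum : TendstoUniformlyOn (fun N z ↦ ∑ k ∈ Finset.range N, (S (k + 1) z - S k z))
      (fun z ↦ ∑' k, (S (k + 1) z - S k z)) atTop K := by
    refine tendstoUniformlyOn_tsum_nat_eventually hδ ?_
    filter_upwards [eventually_ge_atTop ⌈R⌉₊] with m hm z hz
    refine hS m z ((mem_closedBall_zero_iff.1 (hKR hz)).trans ?_)
    exact (Nat.le_ceil R).trans (by exact_mod_cast hm)
  rw [Metric.tendstoUniformlyOn_iff] at hsum ⊢
  intro η hη
  filter_upwards [hsum η hη] with N hN z hz
  have := hN z hz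
  rw [Finset.sum_range_sub (fun k ↦ S k z), dist_eq_norm] at this
  rw [dist_eq_norm]
  convert this using 2
  abel

theorem le_half_pow_mul_of_le_half {δ : ℕ → ℝ} (hδ : ∀ m, δ (m + 1) ≤ δ m / 2) (m k : ℕ) :
    δ (m + k) ≤ (1 / 2) ^ k * δ m := by
  induction k with
  | zero => simp
  | succ k ih => rw [← add_assoc, pow_succ]; linarith [hδ (m + k)]

theorem summable_shift_of_le_half {δ : ℕ → ℝ} (hδ : ∀ m, δ (m + 1) ≤ δ m / 2)
    (hδ₀ : ∀ m, 0 ≤ δ m) (m : ℕ) : Summable fun k ↦ δ (m + k) :=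
  .of_nonneg_of_le (fun _ ↦ hδ₀ _) (le_half_pow_mul_of_le_half hδ m)
    (summable_geometric_two.mul_right _)

theorem tsum_shift_le_two_mul_of_le_half {δ : ℕ → ℝ} (hδ : ∀ m, δ (m + 1) ≤ δ m / 2)
    (hδ₀ : ∀ m, 0 ≤ δ m) (m : ℕ) : ∑' k, δ (m + k) ≤ 2 * δ m :=
  calc ∑' k, δ (m + k) ≤ ∑' k : ℕ, (1 / 2) ^ k * δ m :=
        (summable_shift_of_le_half hδ hδ₀ m).tsum_le_tsum (le_half_pow_mul_of_le_half hδ m)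
          (summable_geometric_two.mul_right _)
    _ = 2 * δ m := by rw [tsum_mul_right, tsum_geometric_two]

theorem exists_pos_le_half_lt_of_continuous {ε : ℝ → ℝ} (hε : Continuous ε)
    (hεpos : ∀ x, 0 < ε x) :
    ∃ δ : ℕ → ℝ, (∀ m, 0 < δ m) ∧ (∀ m, δ (m + 1) ≤ δ m / 2) ∧
      ∀ (m : ℕ) (x : ℝ), |x| ≤ m + 1 → δ m < ε x := by
  have hmin (m : ℕ) : ∃ y ∈ Icc (-(m + 1 : ℝ)) (m + 1), ∀ x ∈ Icc (-(m + 1 : ℝ)) (m + 1),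
      ε y ≤ ε x :=
    isCompact_Icc.exists_isMinOn (nonempty_Icc.2 (by linarith)) hε.continuousOn
  choose y hy hεy using hmin
  refine ⟨fun m ↦ ε (y m) / 2 ^ (m + 1), fun m ↦ by have := hεpos (y m); positivity,
    fun m ↦ ?_, fun m x hx ↦ ?_⟩
  · have h_mono : ε (y (m + 1)) ≤ ε (y m) := hεy (m + 1) (y m) <| by
      obtain ⟨h₁, h₂⟩ := hy m; push_cast; constructor <;> linarith
    rw [div_div, ← pow_succ]
    exact div_le_div_of_nonneg_right h_mono (by positivity)
  · calc ε (y m) / 2 ^ (m + 1) < ε (y m) :=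
          div_lt_self (hεpos _) (one_lt_pow₀ one_lt_two (Nat.succ_ne_zero m))
      _ ≤ ε x := hεy m x (abs_le.1 hx)

theorem exists_entire_near_of_le_half {f : ℝ → ℂ} (hf : Continuous f) {δ : ℕ → ℝ}
    (hδ : ∀ m, 0 < δ m) (hδ_half : ∀ m, δ (m + 1) ≤ δ m / 2) :
    ∃ g : ℂ → ℂ, Differentiable ℂ g ∧ ∀ x : ℝ, ‖f x - g x‖ ≤ 5 * δ ⌊|x|⌋₊ := by
  have hδ₀ (m : ℕ) : 0 ≤ δ m := (hδ m).le
  obtain ⟨S, hS, hS_disc, hS_gap, hS_near⟩ := exists_entire_seq_near_on_annuli hf hδ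
  obtain ⟨g, hg⟩ := exists_tendstoLocallyUniformly_of_norm_sub_le
    (by simpa [add_comm] using summable_shift_of_le_half hδ_half hδ₀ 1) hS_disc
  rw [← tendstoLocallyUniformlyOn_univ] at hg
  refine ⟨g, differentiableOn_univ.1 <| hg.differentiableOn
    (.of_forall fun m ↦ (hS m).differentiableOn) isOpen_univ, fun x ↦ ?_⟩
  set m := ⌊|x|⌋₊
  have hm₁ : (m : ℝ) ≤ |x| := Nat.floor_le (abs_nonneg x)
  have hm₂ : |x| ≤ m + 1 := (Nat.lt_floor_add_one _).le
  have h_step (k : ℕ) : dist (S (m + k) x) (S (m + k + 1) x) ≤ 2 * δ (m + k) := by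
    rw [dist_comm, dist_eq_norm]
    rcases k with _ | k
    · simp only [add_zero]
      linarith [hS_gap m x hm₁ hm₂, hδ_half m, hδ m]
    · have hx : ‖(x : ℂ)‖ ≤ (m + (k + 1) : ℕ) := by
        rw [Complex.norm_real, Real.norm_eq_abs]
        push_cast
        linarith [(k.cast_nonneg : (0 : ℝ) ≤ k)]
      linarith [hS_disc _ _ hx, hδ_half (m + (k + 1)), hδ (m + (k + 1))]
  have h_tail : dist (S m x) (g x) ≤ ∑' k, 2 * δ (m + k) := by
    simpa using dist_le_tsum_of_dist_le_of_tendsto₀ (f := fun k ↦ S (m + k) x) _ h_step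
      ((summable_shift_of_le_half hδ_half hδ₀ m).mul_left 2)
      (by simpa [add_comm] using (tendsto_add_atTop_iff_nat m).2 (hg.tendsto_at (mem_univ _)))
  rw [dist_eq_norm, tsum_mul_left] at h_tail
  calc ‖f x - g x‖ ≤ ‖f x - S m x‖ + ‖S m x - g x‖ := norm_sub_le_norm_sub_add_norm_sub _ _ _
    _ ≤ δ m + 2 * (2 * δ m) := by
        refine add_le_add (hS_near m x hm₁ hm₂) (h_tail.trans ?_)
        gcongr
        exact tsum_shift_le_two_mul_of_le_half hδ_half hδ₀ m
    _ = 5 * δ m := by ring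

/-- Carleman's theorem: given a continuous function `f : ℝ → ℂ` and a continuous strictly
positive function `ε : ℝ → (0,∞)`, there exists an entire function `g : ℂ → ℂ` such that
`|f x - g x| < ε x` for every `x ∈ ℝ`. -/
theorem carleman (f : ℝ → ℂ) (hf : Continuous f)
    (ε : ℝ → ℝ) (hε : Continuous ε) (hεpos : ∀ x, 0 < ε x) :
    ∃ g : ℂ → ℂ, Differentiable ℂ g ∧ ∀ x : ℝ, ‖f x - g x‖ < ε x := by
  obtain ⟨δ, hδ, hδ_half, hδ_lt⟩ := exists_pos_le_half_lt_of_continuous (hε.div_const 5)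
    fun x ↦ div_pos (hεpos x) (by norm_num)
  obtain ⟨g, hg, hfg⟩ := exists_entire_near_of_le_half hf hδ hδ_half
  refine ⟨g, hg, fun x ↦ ?_⟩
  linarith [hfg x, hδ_lt ⌊|x|⌋₊ x (Nat.lt_floor_add_one _).le]
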